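/- (Christoffel–Darboux) Let {d_k} be the orthonormal polynomials associated with a measure dσ having positive definite Hankel moment matrix, with leading recurrence coefficient β_{m-1} = √(Δ_m Δ_{m-2})/Δ_{m-1}. Then for all λ, μ with λ ≠ μ: β_{m-1}·(d_{m-1}(λ)d_m(μ) − d_{m-1}(μ)d_m(λ))/(μ − λ) = Σ_{k=0}^{m-1} d_k(λ) d_k(μ). -/

import Mathlib

/-!
Write `L` for the moment functional `X ^ n ↦ b n`. Applying `L` to `X ^ i * D_k`, where `D_k` is
the Hankel determinant with last row `1, X, …, X ^ k`, replaces that last row by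
`b i, …, b (i + k)`; for `i < k` this repeats row `i`, so `D_k` is orthogonal to all polynomials
of lower degree, and the normalization makes the `d k` orthonormal for `(p, q) ↦ L (p * q)`.

Being orthonormal, `d 0, …, d (k + 1)` span the polynomials of degree `≤ k + 1`, so `X * d k`
expands in them with coefficients `L (X * d k * d i) = L (d k * (X * d i))`, which vanish for
`i + 1 < k`. This three-term recurrence, evaluated at `x` and `y` and cross-multiplied,
telescopes to `(y - x) ∑_{k ≤ n} d_k(x) d_k(y) = a_n (d_n(x) d_{n+1}(y) - d_n(y) d_{n+1}(x))`
with `a_n = L (X * d n * d (n + 1))`, the ratio of the leading coefficients of `d n` and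
`d (n + 1)`. For the determinant polynomials this ratio is `√(Δ_{m-2} Δ_m) / Δ_{m-1}` at
`n = m - 1`.
-/

open Polynomial

namespace Polynomial

variable {K : Type*} [Field K]

theorem map_mul_eq_coeff_mul_map_X_pow_mul {L : K[X] →ₗ[K] K} {q : K[X]} {k : ℕ}
    (hq : ∀ p : K[X], p.degree < k → L (p * q) = 0) {p : K[X]} (hp : p.natDegree ≤ k) :
    L (p * q) = p.coeff k * L (X ^ k * q) := by
  have hlow : (p - C (p.coeff k) * X ^ k).degree < ↑k := by
    refine (degree_lt_iff_coeff_zero _ _).2 fun j hj => ?_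
    rw [coeff_sub, coeff_C_mul_X_pow]
    rcases (Nat.cast_le.1 hj).eq_or_lt with rfl | hlt
    · rw [if_pos rfl, sub_self]
    · rw [if_neg hlt.ne', coeff_eq_zero_of_natDegree_lt (hp.trans_lt hlt), sub_zero]
  calc L (p * q) = L ((p - C (p.coeff k) * X ^ k) * q + p.coeff k • (X ^ k * q)) := by
        rw [smul_eq_C_mul]; ring_nf
    _ = p.coeff k * L (X ^ k * q) := by
        rw [map_add, map_smul, hq _ hlow, zero_add, smul_eq_mul]

structure IsOrthonormalUpTo (L : K[X] →ₗ[K] K) (d : ℕ → K[X]) (N : ℕ) : Prop where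
  natDegree_le : ∀ k ≤ N, (d k).natDegree ≤ k
  map_mul_eq_zero : ∀ k ≤ N, ∀ p : K[X], p.degree < k → L (p * d k) = 0
  map_mul_self : ∀ k ≤ N, L (d k * d k) = 1

namespace IsOrthonormalUpTo

variable {L : K[X] →ₗ[K] K} {d : ℕ → K[X]} {N : ℕ}

theorem map_mul_of_lt (h : IsOrthonormalUpTo L d N) {i j : ℕ} (hij : i < j) (hj : j ≤ N) :
    L (d i * d j) = 0 :=
  h.map_mul_eq_zero j hj _ <|
    (degree_le_of_natDegree_le (h.natDegree_le i (hij.le.trans hj))).trans_lt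
      (by exact_mod_cast hij)

theorem map_mul (h : IsOrthonormalUpTo L d N) {i j : ℕ} (hi : i ≤ N) (hj : j ≤ N) :
    L (d i * d j) = if i = j then 1 else 0 := by
  rcases lt_trichotomy i j with hij | rfl | hij
  · rw [h.map_mul_of_lt hij hj, if_neg hij.ne]
  · rw [h.map_mul_self i hi, if_pos rfl]
  · rw [mul_comm, h.map_mul_of_lt hij hi, if_neg hij.ne']

theorem map_sum_smul_mul (h : IsOrthonormalUpTo L d N) {n : ℕ} (hn : n ≤ N)
    (c : Fin (n + 1) → K) (j : Fin (n + 1)) : L ((∑ i, c i • d i) * d j) = c j := by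
  simp only [Finset.sum_mul, map_sum, smul_mul_assoc, map_smul, smul_eq_mul]
  rw [Finset.sum_eq_single j (fun i _ hij => by
      rw [h.map_mul (by omega) (by omega), if_neg (Fin.val_injective.ne hij), mul_zero])
    (by simp), h.map_mul (by omega) (by omega), if_pos rfl, mul_one]

theorem linearIndependent (h : IsOrthonormalUpTo L d N) {n : ℕ} (hn : n ≤ N) :
    LinearIndependent K fun i : Fin (n + 1) => d i :=
  Fintype.linearIndependent_iff.2 fun c hc j => by
    rw [← h.map_sum_smul_mul hn c j, hc, zero_mul, map_zero]

theorem span_eq_degreeLT (h : IsOrthonormalUpTo L d N) {n : ℕ} (hn : n ≤ N) :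
    Submodule.span K (Set.range fun i : Fin (n + 1) => d i) = degreeLT K (n + 1) := by
  refine Submodule.eq_of_le_of_finrank_eq (Submodule.span_le.2 ?_) ?_
  · rintro _ ⟨i, rfl⟩
    exact mem_degreeLT.2 <| (degree_le_of_natDegree_le (h.natDegree_le i (by omega))).trans_lt
      (by exact_mod_cast i.is_lt)
  · rw [finrank_span_eq_card (h.linearIndependent hn),
      Module.finrank_eq_card_basis (degreeLT.basis K (n + 1))]

theorem eq_sum_map_mul_smul (h : IsOrthonormalUpTo L d N) {n : ℕ} (hn : n ≤ N) {p : K[X]}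
    (hp : p.natDegree ≤ n) : p = ∑ i ∈ Finset.range (n + 1), L (p * d i) • d i := by
  have hmem : p ∈ degreeLT K (n + 1) := mem_degreeLT.2 <|
    (degree_le_of_natDegree_le hp).trans_lt (by exact_mod_cast n.lt_succ_self)
  obtain ⟨c, rfl⟩ := (Submodule.mem_span_range_iff_exists_fun K).1
    ((h.span_eq_degreeLT hn).symm ▸ hmem)
  rw [← Fin.sum_univ_eq_sum_range (fun i => L ((∑ i, c i • d i) * d i) • d i)]
  simp only [h.map_sum_smul_mul hn]

theorem natDegree_X_mul_le (h : IsOrthonormalUpTo L d N) {k : ℕ} (hk : k ≤ N) :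
    (X * d k).natDegree ≤ k + 1 :=
  natDegree_mul_le.trans <| by
    rw [natDegree_X, add_comm]; exact Nat.succ_le_succ (h.natDegree_le k hk)

theorem X_mul_eq_sum (h : IsOrthonormalUpTo L d N) {k : ℕ} (hk : k + 1 ≤ N) :
    X * d k = ∑ i ∈ Finset.range (k + 2), L (X * d k * d i) • d i :=
  h.eq_sum_map_mul_smul hk (h.natDegree_X_mul_le (by omega))

theorem map_X_mul_mul_eq_zero (h : IsOrthonormalUpTo L d N) {i k : ℕ} (hk : k ≤ N)
    (hik : i + 1 < k) : L (X * d k * d i) = 0 := by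
  rw [mul_right_comm]
  exact h.map_mul_eq_zero k hk _ <|
    (degree_le_of_natDegree_le (h.natDegree_X_mul_le (by omega))).trans_lt (by exact_mod_cast hik)

theorem three_term_recurrence_zero (h : IsOrthonormalUpTo L d N) (hN : 1 ≤ N) :
    X * d 0 = L (X * d 0 * d 0) • d 0 + L (X * d 0 * d 1) • d 1 := by
  conv_lhs => rw [h.X_mul_eq_sum hN]
  rw [Finset.sum_range_succ, Finset.sum_range_one]

theorem three_term_recurrence (h : IsOrthonormalUpTo L d N) {k : ℕ} (hk : k + 2 ≤ N) :
    X * d (k + 1) = L (X * d k * d (k + 1)) • d k + L (X * d (k + 1) * d (k + 1)) • d (k + 1)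
      + L (X * d (k + 1) * d (k + 2)) • d (k + 2) := by
  conv_lhs => rw [h.X_mul_eq_sum hk]
  rw [Finset.sum_range_succ, Finset.sum_range_succ, Finset.sum_range_succ,
    Finset.sum_eq_zero fun i hi => by
      rw [h.map_X_mul_mul_eq_zero (by omega) (by simp at hi; omega), zero_smul],
    zero_add, mul_right_comm X (d k)]

theorem christoffel_darboux (h : IsOrthonormalUpTo L d N) {n : ℕ} (hn : n + 1 ≤ N) (x y : K) :
    (y - x) * ∑ k ∈ Finset.range (n + 1), (d k).eval x * (d k).eval y
      = L (X * d n * d (n + 1)) * ((d n).eval x * (d (n + 1)).eval y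
          - (d n).eval y * (d (n + 1)).eval x) := by
  induction n with
  | zero =>
    have hx := congrArg (eval x) (h.three_term_recurrence_zero hn)
    have hy := congrArg (eval y) (h.three_term_recurrence_zero hn)
    simp only [eval_mul, eval_X, eval_add, eval_smul, smul_eq_mul] at hx hy
    rw [Finset.sum_range_one]
    linear_combination (d 0).eval x * hy - (d 0).eval y * hx
  | succ n ih =>
    have hx := congrArg (eval x) (h.three_term_recurrence hn)
    have hy := congrArg (eval y) (h.three_term_recurrence hn)
    simp only [eval_mul, eval_X, eval_add, eval_smul, smul_eq_mul] at hx hy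
    rw [Finset.sum_range_succ, mul_add, ih (by omega)]
    linear_combination (d (n + 1)).eval x * hy - (d (n + 1)).eval y * hx

theorem map_X_mul_mul_succ_eq_div (h : IsOrthonormalUpTo L d N) {n : ℕ} (hn : n + 1 ≤ N) :
    L (X * d n * d (n + 1)) = (d n).coeff n / (d (n + 1)).coeff (n + 1) := by
  have hq := h.map_mul_eq_zero (n + 1) hn
  have hnorm := h.map_mul_self (n + 1) hn
  rw [map_mul_eq_coeff_mul_map_X_pow_mul hq (h.natDegree_le _ hn)] at hnorm
  rw [map_mul_eq_coeff_mul_map_X_pow_mul hq (h.natDegree_X_mul_le (by omega)), coeff_X_mul,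
    eq_div_iff (left_ne_zero_of_mul_eq_one hnorm)]
  linear_combination (d n).coeff n * hnorm

end IsOrthonormalUpTo

end Polynomial

namespace Matrix

variable {S : Type*} [CommRing S]

def hankel (c : ℕ → S) (k : ℕ) : Matrix (Fin k) (Fin k) S :=
  of fun i j => c (i + j)

def hankelMinor (c : ℕ → S) (k : ℕ) (j : Fin (k + 1)) : Matrix (Fin k) (Fin k) S :=
  of fun r s => c (r + j.succAbove s)

def hankelRowMatrix (c : ℕ → S) (k : ℕ) (v : Fin (k + 1) → S) :
    Matrix (Fin (k + 1)) (Fin (k + 1)) S :=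
  of fun i j => if (i : ℕ) < k then c (i + j) else v j

theorem det_hankelRowMatrix (c : ℕ → S) (k : ℕ) (v : Fin (k + 1) → S) :
    (hankelRowMatrix c k v).det
      = ∑ j : Fin (k + 1), (-1) ^ (k + (j : ℕ)) * v j * (hankelMinor c k j).det := by
  rw [det_succ_row _ (Fin.last k)]
  refine Finset.sum_congr rfl fun j _ => ?_
  congr 2
  · simp [hankelRowMatrix]
  · ext r s
    simp [hankelRowMatrix, hankelMinor, Fin.succAbove_last]

end Matrix

namespace Polynomial

open Matrix

noncomputable section

variable {R : Type*} [CommRing R]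

def hankelPoly (b : ℕ → R) (k : ℕ) : R[X] :=
  (hankelRowMatrix (fun n => C (b n)) k fun j => X ^ (j : ℕ)).det

theorem hankelPoly_eq_sum (b : ℕ → R) (k : ℕ) :
    hankelPoly b k
      = ∑ j : Fin (k + 1),
          C ((-1) ^ (k + (j : ℕ)) * (hankelMinor b k j).det) * X ^ (j : ℕ) := by
  rw [hankelPoly, det_hankelRowMatrix]
  refine Finset.sum_congr rfl fun j _ => ?_
  rw [show hankelMinor (fun n => C (b n)) k j = (C : R →+* R[X]).mapMatrix (hankelMinor b k j)
    from rfl, ← RingHom.map_det]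
  simp only [map_mul, map_pow, map_neg, map_one]
  ring

theorem hankelPoly_zero (b : ℕ → R) : hankelPoly b 0 = 1 := by
  simp [hankelPoly, hankelRowMatrix, det_unique]

theorem natDegree_hankelPoly_le (b : ℕ → R) (k : ℕ) : (hankelPoly b k).natDegree ≤ k := by
  rw [hankelPoly_eq_sum]
  exact natDegree_sum_le_of_forall_le _ _ fun j _ =>
    (natDegree_C_mul_X_pow_le _ _).trans (Nat.lt_succ_iff.1 j.is_lt)

theorem coeff_hankelPoly (b : ℕ → R) (k : ℕ) :
    (hankelPoly b k).coeff k = (hankel b k).det := by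
  rw [hankelPoly_eq_sum, finsetSum_coeff, Finset.sum_eq_single (Fin.last k)]
  · rw [coeff_C_mul_X_pow, Fin.val_last, if_pos rfl, ← two_mul, pow_mul, neg_one_sq, one_pow,
      one_mul]
    congr 1
    ext r s
    simp [hankelMinor, hankel, Fin.succAbove_last]
  · intro j _ hj
    rw [coeff_C_mul_X_pow, if_neg fun h => hj (Fin.ext (by simp [h]))]
  · simp

def momentFunctional (b : ℕ → R) : R[X] →ₗ[R] R :=
  lsum fun n => b n • LinearMap.id

theorem momentFunctional_monomial (b : ℕ → R) (n : ℕ) (a : R) :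
    momentFunctional b (monomial n a) = b n * a := by
  simp [momentFunctional, sum_monomial_index]

theorem momentFunctional_X_pow_mul_hankelPoly (b : ℕ → R) (i k : ℕ) :
    momentFunctional b (X ^ i * hankelPoly b k)
      = (hankelRowMatrix b k fun j => b (i + j)).det := by
  rw [hankelPoly_eq_sum, Finset.mul_sum, map_sum, det_hankelRowMatrix]
  refine Finset.sum_congr rfl fun j _ => ?_
  rw [mul_left_comm, ← pow_add, C_mul_X_pow_eq_monomial, momentFunctional_monomial]
  ring

theorem momentFunctional_X_pow_mul_hankelPoly_of_lt (b : ℕ → R) {i k : ℕ} (hi : i < k) :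
    momentFunctional b (X ^ i * hankelPoly b k) = 0 := by
  rw [momentFunctional_X_pow_mul_hankelPoly]
  refine det_zero_of_row_eq (i := ⟨i, by omega⟩) (j := Fin.last k)
    (by simp [Fin.ext_iff]; omega) ?_
  ext j
  simp [hankelRowMatrix, hi]

theorem momentFunctional_X_pow_mul_hankelPoly_self (b : ℕ → R) (k : ℕ) :
    momentFunctional b (X ^ k * hankelPoly b k) = (hankel b (k + 1)).det := by
  rw [momentFunctional_X_pow_mul_hankelPoly]
  congr 1
  ext i j
  by_cases hi : (i : ℕ) < k
  · simp [hankelRowMatrix, hankel, hi]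
  · simp [hankelRowMatrix, hankel, show (i : ℕ) = k by omega]

theorem momentFunctional_mul_hankelPoly_eq_zero (b : ℕ → R) {k : ℕ} {p : R[X]}
    (hp : p.degree < k) : momentFunctional b (p * hankelPoly b k) = 0 := by
  classical
  have : degreeLT R k
      ≤ LinearMap.ker (momentFunctional b ∘ₗ LinearMap.mulRight R (hankelPoly b k)) := by
    rw [degreeLT_eq_span_X_pow, Submodule.span_le]
    intro q hq
    simp only [Finset.coe_image, Finset.coe_range, Set.mem_image, Set.mem_Iio] at hq
    obtain ⟨i, hi, rfl⟩ := hq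
    exact momentFunctional_X_pow_mul_hankelPoly_of_lt b hi
  exact this (mem_degreeLT.2 hp)

theorem isOrthonormalUpTo_hankelPoly {b : ℕ → ℝ} {N : ℕ}
    (hpos : ∀ k ≤ N, 0 < (hankel b (k + 1)).det) {d : ℕ → ℝ[X]}
    (hd : ∀ k ≤ N,
      d k = (1 / √((hankel b (k + 1)).det * (hankel b k).det)) • hankelPoly b k) :
    IsOrthonormalUpTo (momentFunctional b) d N where
  natDegree_le k hk := by
    rw [hd k hk]
    exact (natDegree_smul_le _ _).trans (natDegree_hankelPoly_le b k)
  map_mul_eq_zero k hk p hp := by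
    rw [hd k hk, mul_smul_comm, map_smul, momentFunctional_mul_hankelPoly_eq_zero b hp, smul_zero]
  map_mul_self k hk := by
    have hlow : 0 < (hankel b k).det := by
      cases k with
      | zero => simp [hankel]
      | succ k => exact hpos k (by omega)
    have hhigh := hpos k hk
    have hsq := Real.mul_self_sqrt (mul_pos hhigh hlow).le
    rw [hd k hk, smul_mul_smul_comm, map_smul, smul_eq_mul,
      map_mul_eq_coeff_mul_map_X_pow_mul (fun p hp => momentFunctional_mul_hankelPoly_eq_zero b hp)
        (natDegree_hankelPoly_le b k),
      coeff_hankelPoly, momentFunctional_X_pow_mul_hankelPoly_self, one_div_mul_one_div, hsq]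
    field_simp

end

end Polynomial

theorem stmt11 (m : ℕ) (hm : 2 ≤ m) (b : ℕ → ℝ) (Δ : ℕ → ℝ)
    (hΔ : ∀ k, Δ k = (Matrix.of fun i j : Fin (k + 1) => b ((i : ℕ) + (j : ℕ))).det)
    (hΔpos : ∀ k ≤ m, 0 < Δ k)
    (d : ℕ → Polynomial ℝ)
    (hd0 : d 0 = Polynomial.C (1 / Real.sqrt (b 0)))
    (hd : ∀ k, 1 ≤ k → k ≤ m → d k =
      (1 / Real.sqrt (Δ k * Δ (k - 1))) •
        (Matrix.of fun i j : Fin (k + 1) =>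
          if (i : ℕ) < k then Polynomial.C (b ((i : ℕ) + (j : ℕ)))
          else Polynomial.X ^ (j : ℕ)).det)
    (β : ℝ) (hβ : β = Real.sqrt (Δ m * Δ (m - 2)) / Δ (m - 1))
    (lam mu : ℝ) (hne : lam ≠ mu) :
    β * ((d (m - 1)).eval lam * (d m).eval mu - (d (m - 1)).eval mu * (d m).eval lam)
        / (mu - lam)
      = ∑ k ∈ Finset.range m, (d k).eval lam * (d k).eval mu := by
  have hH : ∀ k, Δ k = (Matrix.hankel b (k + 1)).det := hΔ
  have hd' : ∀ k ≤ m, d k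
      = (1 / √((Matrix.hankel b (k + 1)).det * (Matrix.hankel b k).det)) • hankelPoly b k := by
    rintro (_ | k) hk
    · simp [hd0, hankelPoly_zero, Matrix.hankel, Matrix.det_unique, smul_eq_C_mul]
    · rw [hd (k + 1) (by omega) hk, hH, Nat.add_sub_cancel, hH]
      rfl
  have hON := isOrthonormalUpTo_hankelPoly (fun k hk => hH k ▸ hΔpos k hk) hd'
  obtain ⟨n, rfl⟩ : ∃ n, m = n + 2 := ⟨m - 2, by omega⟩
  have hβ' : β = momentFunctional b (X * d (n + 1) * d (n + 2)) := by
    have h0 := hH n ▸ hΔpos n (by omega)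
    have h1 := hH (n + 1) ▸ hΔpos (n + 1) (by omega)
    have h2 := hH (n + 2) ▸ hΔpos (n + 2) le_rfl
    rw [hON.map_X_mul_mul_succ_eq_div le_rfl, hd' _ (by omega), hd' _ le_rfl, coeff_smul,
      coeff_smul, coeff_hankelPoly, coeff_hankelPoly, smul_eq_mul, smul_eq_mul, hβ,
      show n + 2 - 2 = n from rfl, show n + 2 - 1 = n + 1 from rfl, hH, hH, hH,
      Real.sqrt_mul h2.le, Real.sqrt_mul h1.le, Real.sqrt_mul h2.le]
    field_simp
    exact Real.sq_sqrt h0.le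
  rw [hβ', show n + 2 - 1 = n + 1 from rfl, div_eq_iff (sub_ne_zero.2 hne.symm),
    mul_comm _ (mu - lam), hON.christoffel_darboux le_rfl]
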